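/- Let 1 ≤ q ≤ α ≤ β ≤ ∞ with 1/s = 1/α − 1/β, and let 1 ≤ u ≤ s ≤ v ≤ ∞. Then there exists a constant C such that for every Lebesgue-measurable f on ℝⁿ, ‖f‖_{q,v,α} ≤ C ‖m_{q,β} f‖_{u,v,s}. -/

import Mathlib

open MeasureTheory ENNReal Set Filter

noncomputable section

namespace RN

variable {n : ℕ}

/-- The half-open cube `I_k^r = ∏_j [k_j r, (k_j+1) r)`. -/
def icube (k : Fin n → ℤ) (r : ℝ) : Set (Fin n → ℝ) :=
  {y | ∀ j, (k j : ℝ) * r ≤ y j ∧ y j < ((k j : ℝ) + 1) * r}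

/-- The open cube `J_x^r` of center `x` and side `r`. -/
def jcube (x : Fin n → ℝ) (r : ℝ) : Set (Fin n → ℝ) :=
  {y | ∀ j, x j - r / 2 < y j ∧ y j < x j + r / 2}

/-- A closed axis-parallel cube with center `c` and half-side `h`. -/
def qcube (c : Fin n → ℝ) (h : ℝ) : Set (Fin n → ℝ) :=
  {y | ∀ j, |y j - c j| ≤ h}

/-- `L^q` "norm" of an `ℝ≥0∞`-valued function on a set. -/
def lqn (q : ℝ≥0∞) (A : Set (Fin n → ℝ)) (g : (Fin n → ℝ) → ℝ≥0∞) : ℝ≥0∞ :=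
  if q = ∞ then essSup (A.indicator g) volume
  else (∫⁻ x in A, g x ^ q.toReal) ^ q.toReal⁻¹

/-- The quantity `_r‖g‖_{q,p}`. -/
def blockNorm (q p : ℝ≥0∞) (g : (Fin n → ℝ) → ℝ≥0∞) (r : ℝ) : ℝ≥0∞ :=
  if p = ∞ then ⨆ x : Fin n → ℝ, lqn q (jcube x r) g
  else (∑' k : Fin n → ℤ, lqn q (icube k r) g ^ p.toReal) ^ p.toReal⁻¹

/-- The `(L^q, ℓ^p)^α(ℝⁿ)` norm. -/
def amal (n : ℕ) (q p α : ℝ≥0∞) (g : (Fin n → ℝ) → ℝ≥0∞) : ℝ≥0∞ :=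
  ⨆ (r : ℝ) (_ : 0 < r),
    ENNReal.ofReal r ^ ((n : ℝ) * (α⁻¹.toReal - q⁻¹.toReal - p⁻¹.toReal)) * blockNorm q p g r

/-- The fractional maximal operator `m_{q,β}` (supremum over axis-parallel cubes). -/
def maxOp (q β : ℝ≥0∞) (g : (Fin n → ℝ) → ℝ≥0∞) (x : Fin n → ℝ) : ℝ≥0∞ :=
  ⨆ (c : Fin n → ℝ) (h : ℝ) (_ : 0 < h) (_ : x ∈ qcube c h),
    volume (qcube c h) ^ (β⁻¹.toReal - q⁻¹.toReal) * lqn q (qcube c h) g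

/-- The weak `L^α` quasi-norm. -/
def weakNorm (α : ℝ≥0∞) (g : (Fin n → ℝ) → ℝ≥0∞) : ℝ≥0∞ :=
  ⨆ (l : ℝ) (_ : 0 < l),
    ENNReal.ofReal l * volume {x | ENNReal.ofReal l < g x} ^ α⁻¹.toReal

/-- Pointwise extended norm of a real-valued function. -/
def en (f : (Fin n → ℝ) → ℝ) : (Fin n → ℝ) → ℝ≥0∞ := fun x => (‖f x‖₊ : ℝ≥0∞)

lemma icube_eq (k : Fin n → ℤ) (r : ℝ) :
    icube k r = Set.pi Set.univ (fun j => Ico ((k j : ℝ) * r) (((k j : ℝ) + 1) * r)) := by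
  ext y; simp [icube, Set.mem_pi]
lemma jcube_eq (x : Fin n → ℝ) (r : ℝ) :
    jcube x r = Set.pi Set.univ (fun j => Ioo (x j - r / 2) (x j + r / 2)) := by
  ext y; simp [jcube, Set.mem_pi]
lemma qcube_eq (c : Fin n → ℝ) (h : ℝ) :
    qcube c h = Set.pi Set.univ (fun j => Icc (c j - h) (c j + h)) := by
  ext y
  simp only [qcube, Set.mem_setOf_eq, Set.mem_pi, Set.mem_univ, forall_true_left, Set.mem_Icc]
  constructor <;> intro H j <;> have := H j <;>
    first
    | (rw [abs_sub_le_iff] at this; constructor <;> linarith [this.1, this.2])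
    | (rw [abs_sub_le_iff]; constructor <;> linarith [this.1, this.2])
lemma measurableSet_icube (k : Fin n → ℤ) (r : ℝ) : MeasurableSet (icube k r) := by
  rw [icube_eq]; exact MeasurableSet.univ_pi fun j => measurableSet_Ico
lemma measurableSet_jcube (x : Fin n → ℝ) (r : ℝ) : MeasurableSet (jcube x r) := by
  rw [jcube_eq]; exact MeasurableSet.univ_pi fun j => measurableSet_Ioo
lemma volume_icube (k : Fin n → ℤ) (r : ℝ) :
    volume (icube k r) = ENNReal.ofReal r ^ n := by
  rw [icube_eq, volume_pi_pi]
  have : ∀ j : Fin n, ((k j : ℝ) + 1) * r - (k j : ℝ) * r = r := fun j => by ring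
  simp [Real.volume_Ico, this]
lemma volume_jcube (x : Fin n → ℝ) (r : ℝ) :
    volume (jcube x r) = ENNReal.ofReal r ^ n := by
  rw [jcube_eq, volume_pi_pi]
  have : ∀ j : Fin n, (x j + r / 2) - (x j - r / 2) = r := fun j => by ring
  simp [Real.volume_Ioo, this]
lemma volume_qcube (c : Fin n → ℝ) (h : ℝ) :
    volume (qcube c h) = ENNReal.ofReal (2 * h) ^ n := by
  rw [qcube_eq, volume_pi_pi]
  have : ∀ j : Fin n, (c j + h) - (c j - h) = 2 * h := fun j => by ring
  simp [Real.volume_Icc, this]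
lemma lqn_mono (q : ℝ≥0∞) {A B : Set (Fin n → ℝ)} (hAB : A ⊆ B)
    (g : (Fin n → ℝ) → ℝ≥0∞) : lqn q A g ≤ lqn q B g := by
  unfold lqn
  split
  · exact essSup_mono_ae (Filter.Eventually.of_forall
      (Set.indicator_le_indicator_of_subset hAB (fun x => zero_le)))
  · exact ENNReal.rpow_le_rpow (lintegral_mono_set hAB) (by positivity)
lemma le_lqn (u : ℝ≥0∞) (hu : 1 ≤ u) {A : Set (Fin n → ℝ)} (hA : MeasurableSet A)
    (h0 : volume A ≠ 0) {g : (Fin n → ℝ) → ℝ≥0∞} {c : ℝ≥0∞} (hc : ∀ x ∈ A, c ≤ g x) :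
    c * volume A ^ u⁻¹.toReal ≤ lqn u A g := by
  unfold lqn
  split
  · rename_i h
    subst h
    simp only [ENNReal.inv_top, ENNReal.toReal_zero, ENNReal.rpow_zero, mul_one]
    by_contra hlt
    push_neg at hlt
    have hae : ∀ᵐ x ∂volume, A.indicator g x ≤ essSup (A.indicator g) volume := ae_le_essSup
    have : volume A = 0 := by
      refine measure_mono_null ?_ (by rw [MeasureTheory.ae_iff] at hae; exact hae)
      intro x hx
      simp only [Set.mem_setOf_eq, not_le]
      calc essSup (A.indicator g) volume < c := hlt
        _ ≤ g x := hc x hx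
        _ = A.indicator g x := (Set.indicator_of_mem hx g).symm
    exact h0 this
  · rename_i h
    have hu0 : u ≠ 0 := by intro h'; simp [h'] at hu
    have ht : 0 < u.toReal := ENNReal.toReal_pos hu0 h
    have key : ∫⁻ x in A, c ^ u.toReal ≤ ∫⁻ x in A, g x ^ u.toReal :=
      setLIntegral_mono' hA fun x hx => ENNReal.rpow_le_rpow (hc x hx) ht.le
    rw [setLIntegral_const] at key
    calc c * volume A ^ u⁻¹.toReal
        = ((c ^ u.toReal) * volume A) ^ u.toReal⁻¹ := by
          rw [ENNReal.mul_rpow_of_nonneg _ _ (by positivity), ← ENNReal.rpow_mul,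
            mul_inv_cancel₀ ht.ne', ENNReal.rpow_one, ENNReal.toReal_inv]
      _ ≤ (∫⁻ x in A, g x ^ u.toReal) ^ u.toReal⁻¹ :=
          ENNReal.rpow_le_rpow key (by positivity)

lemma jcube_subset (x : Fin n → ℝ) (r : ℝ) : jcube x r ⊆ qcube x (r / 2) := fun y hy j => by
  have := hy j; rw [abs_sub_le_iff]; constructor <;> linarith [this.1, this.2]

lemma icube_subset (k : Fin n → ℤ) (r : ℝ) :
    icube k r ⊆ qcube (fun j => (k j : ℝ) * r + r / 2) (r / 2) := fun y hy j => by
  have h1 := (hy j).1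
  have h2 := (hy j).2
  have h3 : ((k j : ℝ) + 1) * r = (k j : ℝ) * r + r := by ring
  rw [abs_sub_le_iff]; constructor <;> simp only [] <;> linarith

lemma le_maxOp (q β : ℝ≥0∞) (g : (Fin n → ℝ) → ℝ≥0∞) {A : Set (Fin n → ℝ)}
    {c : Fin n → ℝ} {h : ℝ} (hh : 0 < h) (hsub : A ⊆ qcube c h) {x : Fin n → ℝ} (hx : x ∈ A) :
    volume (qcube c h) ^ (β⁻¹.toReal - q⁻¹.toReal) * lqn q A g ≤ maxOp q β g x := by
  refine le_trans (mul_le_mul_right (lqn_mono q hsub g) _) ?_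
  exact le_iSup_of_le c (le_iSup_of_le h (le_iSup_of_le hh (le_iSup_of_le (hsub hx) le_rfl)))

lemma key (q β u : ℝ≥0∞) (hu : 1 ≤ u)
    (g : (Fin n → ℝ) → ℝ≥0∞) {A : Set (Fin n → ℝ)} (hA : MeasurableSet A)
    {c : Fin n → ℝ} {r : ℝ} (hr : 0 < r) (hsub : A ⊆ qcube c (r / 2))
    (hvolA : volume A = ENNReal.ofReal r ^ n) :
    lqn q A g ≤ ENNReal.ofReal r ^ ((n : ℝ) * (q⁻¹.toReal - β⁻¹.toReal - u⁻¹.toReal)) *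
      lqn u A (maxOp q β g) := by
  set R := ENNReal.ofReal r with hRdef
  have hR0 : R ≠ 0 := (ENNReal.ofReal_pos.2 hr).ne'
  have hRt : R ≠ ∞ := ENNReal.ofReal_ne_top
  have hvol0 : volume A ≠ 0 := by rw [hvolA]; exact pow_ne_zero _ hR0
  have hvq : volume (qcube c (r / 2)) ^ (β⁻¹.toReal - q⁻¹.toReal)
      = R ^ ((n : ℝ) * (β⁻¹.toReal - q⁻¹.toReal)) := by
    rw [volume_qcube, show 2 * (r / 2) = r by ring, ← ENNReal.rpow_natCast, ← ENNReal.rpow_mul]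
  have hlow : ∀ x ∈ A,
      R ^ ((n : ℝ) * (β⁻¹.toReal - q⁻¹.toReal)) * lqn q A g ≤ maxOp q β g x := fun x hx => by
    rw [← hvq]; exact le_maxOp q β g (by positivity) hsub hx
  have h2 := le_lqn u hu hA hvol0 hlow
  rw [hvolA, ← ENNReal.rpow_natCast, ← ENNReal.rpow_mul] at h2
  have h3 : R ^ ((n : ℝ) * (β⁻¹.toReal - q⁻¹.toReal) + (n : ℝ) * u⁻¹.toReal) * lqn q A g
      ≤ lqn u A (maxOp q β g) := by
    rw [ENNReal.rpow_add _ _ hR0 hRt, mul_right_comm]; exact h2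
  set z : ℝ := (n : ℝ) * (β⁻¹.toReal - q⁻¹.toReal) + (n : ℝ) * u⁻¹.toReal with hz
  have hF0 : R ^ z ≠ 0 := by
    rw [hRdef, ENNReal.ofReal_rpow_of_pos hr]
    simp [ENNReal.ofReal_eq_zero, not_le, Real.rpow_pos_of_pos hr z]
  have hFt : R ^ z ≠ ∞ := by
    rw [hRdef, ENNReal.ofReal_rpow_of_pos hr]; exact ENNReal.ofReal_ne_top
  have h4 : lqn q A g ≤ (R ^ z)⁻¹ * lqn u A (maxOp q β g) := by
    rw [← one_mul (lqn q A g), ← ENNReal.inv_mul_cancel hF0 hFt, mul_assoc]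
    exact mul_le_mul_right h3 _
  refine h4.trans_eq ?_
  rw [← ENNReal.rpow_neg]
  congr 2
  rw [hz]; ring

lemma blockNorm_le (q β u v : ℝ≥0∞) (hu : 1 ≤ u) (hv : 1 ≤ v)
    (g : (Fin n → ℝ) → ℝ≥0∞) (r : ℝ) (hr : 0 < r) :
    blockNorm q v g r ≤ ENNReal.ofReal r ^ ((n : ℝ) * (q⁻¹.toReal - β⁻¹.toReal - u⁻¹.toReal)) *
      blockNorm u v (maxOp q β g) r := by
  set D := ENNReal.ofReal r ^ ((n : ℝ) * (q⁻¹.toReal - β⁻¹.toReal - u⁻¹.toReal)) with hD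
  unfold blockNorm
  split
  · refine iSup_le fun x => ?_
    have hkey := key q β u hu g (measurableSet_jcube x r) hr (jcube_subset x r) (volume_jcube x r)
    exact hkey.trans (mul_le_mul_right (le_iSup (fun y => lqn u (jcube y r) (maxOp q β g)) x) _)
  · rename_i hvt
    have htv : 0 < v.toReal := ENNReal.toReal_pos (by intro h'; simp [h'] at hv) hvt
    have hterm : ∀ k : Fin n → ℤ, lqn q (icube k r) g ^ v.toReal
        ≤ D ^ v.toReal * lqn u (icube k r) (maxOp q β g) ^ v.toReal := fun k => by
      rw [← ENNReal.mul_rpow_of_nonneg _ _ htv.le]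
      exact ENNReal.rpow_le_rpow
        (key q β u hu g (measurableSet_icube k r) hr (icube_subset k r) (volume_icube k r)) htv.le
    calc (∑' k : Fin n → ℤ, lqn q (icube k r) g ^ v.toReal) ^ v.toReal⁻¹
        ≤ (∑' k : Fin n → ℤ, D ^ v.toReal * lqn u (icube k r) (maxOp q β g) ^ v.toReal) ^ v.toReal⁻¹ :=
          ENNReal.rpow_le_rpow (ENNReal.tsum_le_tsum hterm) (by positivity)
      _ = D * (∑' k : Fin n → ℤ, lqn u (icube k r) (maxOp q β g) ^ v.toReal) ^ v.toReal⁻¹ := by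
          rw [ENNReal.tsum_mul_left, ENNReal.mul_rpow_of_nonneg _ _ (by positivity),
            ← ENNReal.rpow_mul, mul_inv_cancel₀ htv.ne', ENNReal.rpow_one]

/-- If `1 ≤ q ≤ α ≤ β ≤ ∞` with `1/s = 1/α − 1/β` and
`1 ≤ u ≤ s ≤ v ≤ ∞`, then `‖f‖_{q,v,α} ≤ C ‖m_{q,β}f‖_{u,v,s}`. -/
theorem amalgam_le_frac_max (n : ℕ) (hn : 0 < n) (q α β s u v : ℝ≥0∞)
    (hq : 1 ≤ q) (hqα : q ≤ α) (hαβ : α ≤ β)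
    (hs : s⁻¹ = α⁻¹ - β⁻¹) (hu : 1 ≤ u) (hus : u ≤ s) (hsv : s ≤ v) :
    ∃ C > (0 : ℝ), ∀ f : (Fin n → ℝ) → ℝ, Measurable f →
      amal n q v α (en f) ≤ ENNReal.ofReal C * amal n u v s (maxOp q β (en f)) := by
  refine ⟨1, one_pos, fun f hf => ?_⟩
  rw [ENNReal.ofReal_one, one_mul]
  have hα0 : α ≠ 0 := (zero_lt_one.trans_le (hq.trans hqα)).ne'
  have hβα : β⁻¹ ≤ α⁻¹ := ENNReal.inv_le_inv' hαβ
  have hsinv : s⁻¹.toReal = α⁻¹.toReal - β⁻¹.toReal := by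
    rw [hs, ENNReal.toReal_sub_of_le hβα (ENNReal.inv_ne_top.2 hα0)]
  have hv1 : (1 : ℝ≥0∞) ≤ v := (hu.trans hus).trans hsv
  unfold amal
  refine iSup_le fun r => iSup_le fun hr => ?_
  have hR0 : ENNReal.ofReal r ≠ 0 := (ENNReal.ofReal_pos.2 hr).ne'
  have hRt : ENNReal.ofReal r ≠ ∞ := ENNReal.ofReal_ne_top
  have hb := blockNorm_le q β u v hu hv1 (en f) r hr
  calc ENNReal.ofReal r ^ ((n : ℝ) * (α⁻¹.toReal - q⁻¹.toReal - v⁻¹.toReal)) *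
        blockNorm q v (en f) r
      ≤ ENNReal.ofReal r ^ ((n : ℝ) * (α⁻¹.toReal - q⁻¹.toReal - v⁻¹.toReal)) *
        (ENNReal.ofReal r ^ ((n : ℝ) * (q⁻¹.toReal - β⁻¹.toReal - u⁻¹.toReal)) *
          blockNorm u v (maxOp q β (en f)) r) := mul_le_mul_right hb _
    _ = ENNReal.ofReal r ^ ((n : ℝ) * (s⁻¹.toReal - u⁻¹.toReal - v⁻¹.toReal)) *
        blockNorm u v (maxOp q β (en f)) r := by
        rw [← mul_assoc, ← ENNReal.rpow_add _ _ hR0 hRt]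
        congr 2
        rw [hsinv]; ring
    _ ≤ amal n u v s (maxOp q β (en f)) :=
        le_iSup_of_le r (le_iSup_of_le hr le_rfl)
end RN
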